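/- For every real a ≥ 0, every integer n ≥ 1, all reals 0 ≤ α ≤ β and every x ≥ 0, the first moment of the generalized Baskakov–Kantorovich–Stancu operator is T_{n,a}^{α,β}(t;x) = (n/(n+β))·x + (a/(n+β))·x/(1+x) + (2α+1)/(2(n+β)). -/

import Mathlib

open MeasureTheory Filter

/-- Rising factorial `(n)_i = n(n+1)⋯(n+i−1)`, with `(n)_0 = 1`. -/
noncomputable def risingFac (n i : ℕ) : ℝ := ∏ j ∈ Finset.range i, ((n : ℝ) + j)

/-- `p_k(n,a) = Σ_{i=0}^{k} C(k,i)·(n)_i·a^{k−i}`. -/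
noncomputable def pCoef (n : ℕ) (a : ℝ) (k : ℕ) : ℝ :=
  ∑ i ∈ Finset.range (k + 1), (Nat.choose k i : ℝ) * risingFac n i * a ^ (k - i)

/-- Generalized Baskakov basis function `W_{n,k}^a(x)`. -/
noncomputable def W (n : ℕ) (a : ℝ) (k : ℕ) (x : ℝ) : ℝ :=
  Real.exp (-(a * x) / (1 + x)) * (pCoef n a k / (Nat.factorial k : ℝ)) * x ^ k /
    (1 + x) ^ (k + n)

/-- Stancu-type operator `L_{n,a}^{α,β}(f;x) = Σ_k W_{n,k}^a(x) f((k+α)/(n+β))`. -/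
noncomputable def Lop (n : ℕ) (a α β : ℝ) (f : ℝ → ℝ) (x : ℝ) : ℝ :=
  ∑' k : ℕ, W n a k x * f (((k : ℝ) + α) / ((n : ℝ) + β))

/-- Generalized Baskakov–Kantorovich–Stancu operator `T_{n,a}^{α,β}(f;x)`. -/
noncomputable def TKS (n : ℕ) (a α β : ℝ) (f : ℝ → ℝ) (x : ℝ) : ℝ :=
  ((n : ℝ) + β) *
    ∑' k : ℕ, W n a k x *
      ∫ t in (((k : ℝ) + α) / ((n : ℝ) + β))..(((k : ℝ) + α + 1) / ((n : ℝ) + β)), f t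

lemma risingFac_eq_ascFactorial (n i : ℕ) : risingFac n i = (n.ascFactorial i : ℝ) := by
  induction i with
  | zero => simp [risingFac]
  | succ i ih =>
      rw [risingFac, Finset.prod_range_succ, ← risingFac, ih, Nat.ascFactorial_succ]
      push_cast; ring

lemma risingFac_zero (n : ℕ) : risingFac n 0 = 1 := by simp [risingFac]

lemma risingFac_nonneg (n i : ℕ) : 0 ≤ risingFac n i := by
  apply Finset.prod_nonneg; intro j _; positivity

lemma risingFac_succ_left (n i : ℕ) : risingFac n (i + 1) = n * risingFac (n + 1) i := by
  rw [risingFac, Finset.prod_range_succ', risingFac]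
  rw [mul_comm]
  congr 1
  · push_cast; ring
  · apply Finset.prod_congr rfl
    intro j _; push_cast; ring

lemma hasSum_risingFac (m : ℕ) (hm : 1 ≤ m) {t : ℝ} (ht : |t| < 1) :
    HasSum (fun i : ℕ => risingFac m i / (Nat.factorial i : ℝ) * t ^ i)
      (1 / (1 - t) ^ m) := by
  obtain ⟨m', rfl⟩ : ∃ m', m = m' + 1 := ⟨m - 1, by omega⟩
  have h := hasSum_choose_mul_geometric_of_norm_lt_one (𝕜 := ℝ) m' (r := t)
    (by rwa [Real.norm_eq_abs])
  convert h using 2 with i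
  · rfl
  · rw [risingFac_eq_ascFactorial, Nat.ascFactorial_eq_factorial_mul_choose]
    have : (m' + i).choose i = (i + m').choose m' := by
      rw [Nat.add_comm m' i]
      simpa [Nat.add_sub_cancel_left] using (Nat.choose_symm (Nat.le_add_right i m')).symm
    rw [this]
    push_cast
    have hi : (Nat.factorial i : ℝ) ≠ 0 := by positivity
    field_simp

lemma hasSum_pCoef (m : ℕ) (hm : 1 ≤ m) {a : ℝ} (ha : 0 ≤ a) {t : ℝ}
    (ht0 : 0 ≤ t) (ht1 : t < 1) :
    HasSum (fun k : ℕ => pCoef m a k / (Nat.factorial k : ℝ) * t ^ k)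
      (Real.exp (a * t) / (1 - t) ^ m) := by
  set u : ℕ → ℝ := fun i => risingFac m i / (Nat.factorial i : ℝ) * t ^ i with hu_def
  set v : ℕ → ℝ := fun j => (a * t) ^ j / (Nat.factorial j : ℝ) with hv_def
  have hu : HasSum u (1 / (1 - t) ^ m) :=
    hasSum_risingFac m hm (by rw [abs_of_nonneg ht0]; exact ht1)
  have hv : HasSum v (Real.exp (a * t)) := by
    rw [Real.exp_eq_exp_ℝ]
    exact NormedSpace.expSeries_div_hasSum_exp (a * t)
  have hun : Summable fun i => ‖u i‖ := by
    have : (fun i => ‖u i‖) = u := by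
      funext i
      exact Real.norm_of_nonneg (by
        have := risingFac_nonneg m i
        have h2 : (0:ℝ) ≤ t ^ i := by positivity
        have h3 : (0:ℝ) < (Nat.factorial i : ℝ) := by positivity
        positivity)
    rw [this]; exact hu.summable
  have hvn : Summable fun j => ‖v j‖ := NormedSpace.norm_expSeries_div_summable (a * t)
  have key := hasSum_sum_range_mul_of_summable_norm hun hvn
  rw [hu.tsum_eq, hv.tsum_eq] at key
  have hval : 1 / (1 - t) ^ m * Real.exp (a * t) = Real.exp (a * t) / (1 - t) ^ m := by
    ring
  rw [hval] at key
  have hfun : ∀ k : ℕ, (∑ i ∈ Finset.range (k + 1), u i * v (k - i)) =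
      pCoef m a k / (Nat.factorial k : ℝ) * t ^ k := by
    intro k
    rw [pCoef, Finset.sum_div, Finset.sum_mul]
    apply Finset.sum_congr rfl
    intro i hi
    have hik : i ≤ k := by simpa [Nat.lt_succ_iff] using hi
    have htk : t ^ k = t ^ i * t ^ (k - i) := by
      rw [← pow_add]; congr 1; omega
    rw [hu_def, hv_def]
    simp only
    rw [Nat.cast_choose ℝ hik, mul_pow, htk]
    have h1 : (Nat.factorial i : ℝ) ≠ 0 := by positivity
    have h2 : (Nat.factorial (k - i) : ℝ) ≠ 0 := by positivity
    have h3 : (Nat.factorial k : ℝ) ≠ 0 := by positivity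
    field_simp
  exact (funext hfun ▸ key : _)

lemma pCoef_succ (n : ℕ) (a : ℝ) (k : ℕ) :
    pCoef n a (k + 1) = a * pCoef n a k + n * pCoef (n + 1) a k := by
  -- S2 = ∑_{j ∈ range (k+2)} C(k,j) rf n j a^(k+1-j)
  set S2 : ℝ := ∑ j ∈ Finset.range (k + 2),
      (Nat.choose k j : ℝ) * risingFac n j * a ^ (k + 1 - j) with hS2_def
  have h1 : S2 = a * pCoef n a k := by
    rw [hS2_def, Finset.sum_range_succ]
    simp only [Nat.choose_succ_self, Nat.cast_zero, zero_mul, add_zero]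
    rw [pCoef, Finset.mul_sum]
    apply Finset.sum_congr rfl
    intro j hj
    have hjk : j ≤ k := by simpa [Nat.lt_succ_iff] using hj
    have : k + 1 - j = (k - j) + 1 := by omega
    rw [this, pow_succ]
    ring
  have h2 : S2 = (∑ i ∈ Finset.range (k + 1),
      (Nat.choose k (i + 1) : ℝ) * risingFac n (i + 1) * a ^ (k - i)) + a ^ (k + 1) := by
    rw [hS2_def, Finset.sum_range_succ']
    simp [risingFac, Nat.succ_sub_succ]
  have h3 : (∑ i ∈ Finset.range (k + 1),
      (Nat.choose k i : ℝ) * risingFac n (i + 1) * a ^ (k - i)) = n * pCoef (n + 1) a k := by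
    rw [pCoef, Finset.mul_sum]
    apply Finset.sum_congr rfl
    intro i _
    rw [risingFac_succ_left]
    ring
  rw [pCoef, Finset.sum_range_succ']
  simp only [Nat.succ_sub_succ, Nat.choose_zero_right, Nat.cast_one, one_mul,
    Nat.sub_zero, risingFac_zero, mul_one]
  have hsplit : ∀ i ∈ Finset.range (k + 1),
      ((k + 1).choose (i + 1) : ℝ) * risingFac n (i + 1) * a ^ (k - i) =
        (Nat.choose k i : ℝ) * risingFac n (i + 1) * a ^ (k - i) +
          (Nat.choose k (i + 1) : ℝ) * risingFac n (i + 1) * a ^ (k - i) := by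
    intro i _
    rw [Nat.choose_succ_succ]
    push_cast
    ring
  rw [Finset.sum_congr rfl hsplit, Finset.sum_add_distrib, h3]
  have : (∑ i ∈ Finset.range (k + 1),
      (Nat.choose k (i + 1) : ℝ) * risingFac n (i + 1) * a ^ (k - i)) = S2 - a ^ (k + 1) := by
    rw [h2]; ring
  rw [this, h1]
  ring

section Wsums

variable {n : ℕ} {a x : ℝ}

lemma W_eq (hn : 1 ≤ n) (hx : 0 ≤ x) (k : ℕ) :
    W n a k x = Real.exp (-(a * x) / (1 + x)) / (1 + x) ^ n *
      (pCoef n a k / (Nat.factorial k : ℝ) * (x / (1 + x)) ^ k) := by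
  have h1 : (0:ℝ) < 1 + x := by linarith
  rw [W, pow_add, div_pow]
  have h2 : ((1:ℝ) + x) ^ k ≠ 0 := by positivity
  have h3 : ((1:ℝ) + x) ^ n ≠ 0 := by positivity
  field_simp

lemma hasSum_W (hn : 1 ≤ n) (ha : 0 ≤ a) (hx : 0 ≤ x) :
    HasSum (fun k => W n a k x) 1 := by
  have h1 : (0:ℝ) < 1 + x := by linarith
  set t : ℝ := x / (1 + x) with ht_def
  have ht0 : 0 ≤ t := by positivity
  have ht1 : t < 1 := by rw [ht_def, div_lt_one h1]; linarith
  have h1t : 1 - t = 1 / (1 + x) := by rw [ht_def]; field_simp; ring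
  have harg : -(a * x) / (1 + x) = -(a * t) := by rw [ht_def]; field_simp
  have hp := (hasSum_pCoef n hn ha ht0 ht1).mul_left
    (Real.exp (-(a * x) / (1 + x)) / (1 + x) ^ n)
  have heq : (fun k => Real.exp (-(a * x) / (1 + x)) / (1 + x) ^ n *
      (pCoef n a k / (Nat.factorial k : ℝ) * t ^ k)) = fun k => W n a k x :=
    funext fun k => (W_eq hn hx k).symm
  rw [heq] at hp
  convert hp using 1
  · rfl
  rw [harg, h1t, Real.exp_neg, div_pow]
  have h3 : ((1:ℝ) + x) ^ n ≠ 0 := by positivity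
  have h4 := Real.exp_ne_zero (a * t)
  field_simp
  simp

lemma kW_aux (n k : ℕ) (a c t : ℝ) :
    ((k : ℝ) + 1) * (c * (pCoef n a (k + 1) / (Nat.factorial (k + 1) : ℝ) * t ^ (k + 1))) =
      c * t * (a * (pCoef n a k / (Nat.factorial k : ℝ) * t ^ k) +
        (n : ℝ) * (pCoef (n + 1) a k / (Nat.factorial k : ℝ) * t ^ k)) := by
  rw [pCoef_succ, Nat.factorial_succ, pow_succ]
  have h2 : (Nat.factorial k : ℝ) ≠ 0 := by positivity
  have h3 : ((k : ℝ) + 1) ≠ 0 := by positivity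
  push_cast
  field_simp

lemma hasSum_kW (hn : 1 ≤ n) (ha : 0 ≤ a) (hx : 0 ≤ x) :
    HasSum (fun k : ℕ => (k : ℝ) * W n a k x) (a * (x / (1 + x)) + n * x) := by
  have h1 : (0:ℝ) < 1 + x := by linarith
  have ht0 : 0 ≤ x / (1 + x) := by positivity
  have ht1 : x / (1 + x) < 1 := by rw [div_lt_one h1]; linarith
  have h1t : 1 - x / (1 + x) = 1 / (1 + x) := by field_simp; ring
  have harg : -(a * x) / (1 + x) = -(a * (x / (1 + x))) := by
    rw [neg_div, mul_div_assoc]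
  have hs1 := hasSum_pCoef n hn ha ht0 ht1
  have hs2 := hasSum_pCoef (n + 1) (by omega) ha ht0 ht1
  have key := ((hs1.mul_left a).add (hs2.mul_left (n : ℝ))).mul_left
    (Real.exp (-(a * x) / (1 + x)) / (1 + x) ^ n * (x / (1 + x)))
  have heq : (fun k : ℕ =>
      Real.exp (-(a * x) / (1 + x)) / (1 + x) ^ n * (x / (1 + x)) *
        (a * (pCoef n a k / (Nat.factorial k : ℝ) * (x / (1 + x)) ^ k) +
          (n : ℝ) * (pCoef (n + 1) a k / (Nat.factorial k : ℝ) * (x / (1 + x)) ^ k))) =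
      fun k : ℕ => ((k : ℕ) + 1 : ℝ) * W n a (k + 1) x := by
    funext k
    rw [W_eq hn hx (k + 1)]
    exact (kW_aux n k a _ _).symm
  rw [heq] at key
  have hfe : (fun k : ℕ => ((k + 1 : ℕ) : ℝ) * W n a (k + 1) x) =
      fun k : ℕ => ((k : ℝ) + 1) * W n a (k + 1) x := by
    funext k; push_cast; ring
  have key2 := key
  rw [← hfe] at key2
  have h4 := (hasSum_nat_add_iff (f := fun k => (k : ℝ) * W n a k x) 1).mp key2
  simp only [Finset.range_one, Finset.sum_singleton, Nat.cast_zero, zero_mul, add_zero] at h4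
  convert h4 using 1
  · rfl
  rw [harg, h1t, Real.exp_neg, one_div, inv_pow]
  have h5 : ((1:ℝ) + x) ^ n ≠ 0 := by positivity
  have h6 := Real.exp_ne_zero (a * (x / (1 + x)))
  field_simp
  rw [div_pow, one_pow, pow_succ]
  field_simp

end Wsums

theorem Top_first_moment (a : ℝ) (ha : 0 ≤ a) (n : ℕ) (hn : 1 ≤ n) (α β : ℝ)
    (hα : 0 ≤ α) (hαβ : α ≤ β) (x : ℝ) (hx : 0 ≤ x) :
    TKS n a α β (fun t => t) x =
      ((n : ℝ) / ((n : ℝ) + β)) * x + (a / ((n : ℝ) + β)) * (x / (1 + x)) +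
        (2 * α + 1) / (2 * ((n : ℝ) + β)) := by
  have hnR : (1:ℝ) ≤ (n:ℝ) := by exact_mod_cast hn
  have hb : 0 ≤ β := hα.trans hαβ
  have hnb : (0:ℝ) < (n:ℝ) + β := by linarith
  have h1x : (0:ℝ) < 1 + x := by linarith
  have hW := hasSum_W hn ha hx
  have hkW := hasSum_kW hn ha hx
  have hcomb := (hkW.mul_left ((((n:ℝ) + β) ^ 2)⁻¹)).add
    (hW.mul_left ((2 * α + 1) / (2 * ((n:ℝ) + β) ^ 2)))
  have hterm : ∀ k : ℕ,
      (((n:ℝ) + β) ^ 2)⁻¹ * ((k:ℝ) * W n a k x) +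
        (2 * α + 1) / (2 * ((n:ℝ) + β) ^ 2) * W n a k x =
      W n a k x *
        ∫ t in (((k:ℝ) + α) / ((n:ℝ) + β))..(((k:ℝ) + α + 1) / ((n:ℝ) + β)),
          (fun t => t) t := by
    intro k
    simp only
    rw [integral_id]
    have hne : ((n:ℝ) + β) ≠ 0 := ne_of_gt hnb
    field_simp
    ring
  rw [funext hterm] at hcomb
  rw [TKS, hcomb.tsum_eq]
  have hne : ((n:ℝ) + β) ≠ 0 := ne_of_gt hnb
  have h1xne : (1:ℝ) + x ≠ 0 := ne_of_gt h1x
  field_simp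
  ring
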